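/- If the sign sequence is periodic with period p, i.e., σ_{k+p} = σ_k for all k ∈ ℕ₀, then for every n ∈ ℕ the word a_{np} = ε_1 ε_2 ⋯ ε_{2^{np}} of coefficients of P_{np} satisfies a_{np} = φ((S_{σ_0} ∘ S_{σ_1} ∘ ⋯ ∘ S_{σ_{p−1}})^n (A)), where S_σ denotes S₊ if σ = 1 and S₋ if σ = −1. -/
import Mathlib


open Polynomial

/-- The pair of polynomial sequences `(P_k, Q_k)` defined by `P_0 = Q_0 = X` and
`P_{k+1} = P_k + σ_k x^{2^k} Q_k`, `Q_{k+1} = P_k - σ_k x^{2^k} Q_k`. -/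
noncomputable def PQ (σ : ℕ → ℤ) : ℕ → Polynomial ℂ × Polynomial ℂ
  | 0 => (Polynomial.X, Polynomial.X)
  | k + 1 =>
      ((PQ σ k).1 + Polynomial.C ((σ k : ℂ)) * Polynomial.X ^ 2 ^ k * (PQ σ k).2,
       (PQ σ k).1 - Polynomial.C ((σ k : ℂ)) * Polynomial.X ^ 2 ^ k * (PQ σ k).2)

/-- The four-letter alphabet `{A, B, Ā, B̄}`. -/
inductive Letter : Type
  | A | B | Abar | Bbar
  deriving DecidableEq, Repr

/-- The substitution `S₊ : A ↦ AB, B ↦ AB̄, Ā ↦ ĀB̄, B̄ ↦ ĀB`. -/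
def Splus : Letter → List Letter
  | .A => [.A, .B]
  | .B => [.A, .Bbar]
  | .Abar => [.Abar, .Bbar]
  | .Bbar => [.Abar, .B]

/-- The substitution `S₋ : A ↦ AB̄, B ↦ AB, Ā ↦ ĀB, B̄ ↦ ĀB̄`. -/
def Sminus : Letter → List Letter
  | .A => [.A, .Bbar]
  | .B => [.A, .B]
  | .Abar => [.Abar, .B]
  | .Bbar => [.Abar, .Bbar]

/-- `S_σ` is `S₊` if `σ = 1` and `S₋` otherwise (in particular if `σ = -1`). -/
def Ssign (s : ℤ) : Letter → List Letter :=
  if s = 1 then Splus else Sminus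

/-- `comp σ k u = (S_{σ_0} ∘ S_{σ_1} ∘ ⋯ ∘ S_{σ_{k-1}})(u)`. -/
def comp (σ : ℕ → ℤ) : ℕ → List Letter → List Letter
  | 0, u => u
  | k + 1, u => comp σ k (u.flatMap (Ssign (σ k)))

/-- The factor map `φ : A, B ↦ 1`, `Ā, B̄ ↦ -1`. -/
def phi : Letter → ℂ
  | .A => 1
  | .B => 1
  | .Abar => -1
  | .Bbar => -1

/- ### auxiliary lemmas -/


def bar : Letter → Letter
  | .A => .Abar
  | .B => .Bbar
  | .Abar => .A
  | .Bbar => .B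

lemma Ssign_bar (s : ℤ) (l : Letter) : Ssign s (bar l) = (Ssign s l).map bar := by
  unfold Ssign
  split <;> cases l <;> rfl

lemma phi_bar (l : Letter) : phi (bar l) = -phi l := by cases l <;> simp [bar, phi]

lemma comp_append (σ : ℕ → ℤ) : ∀ (k : ℕ) (u v : List Letter),
    comp σ k (u ++ v) = comp σ k u ++ comp σ k v := by
  intro k
  induction k with
  | zero => intro u v; rfl
  | succ k ih =>
    intro u v
    show comp σ k ((u ++ v).flatMap (Ssign (σ k)))
      = comp σ k (u.flatMap (Ssign (σ k))) ++ comp σ k (v.flatMap (Ssign (σ k)))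
    rw [List.flatMap_append, ih]

lemma comp_map_bar (σ : ℕ → ℤ) : ∀ (k : ℕ) (w : List Letter),
    comp σ k (w.map bar) = (comp σ k w).map bar := by
  intro k
  induction k with
  | zero => intro w; rfl
  | succ k ih =>
    intro w
    show comp σ k ((w.map bar).flatMap (Ssign (σ k)))
      = (comp σ k (w.flatMap (Ssign (σ k)))).map bar
    rw [← ih]
    congr 1
    rw [List.flatMap_map, List.map_flatMap]
    congr 1
    funext l
    exact Ssign_bar (σ k) l

lemma comp_succ_single (σ : ℕ → ℤ) (k : ℕ) (l : Letter) :
    comp σ (k + 1) [l] = comp σ k (Ssign (σ k) l) := by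
  show comp σ k ([l].flatMap (Ssign (σ k))) = comp σ k (Ssign (σ k) l)
  congr 1
  simp

lemma coeff_term (a : ℂ) (n : ℕ) (q : Polynomial ℂ) (j : ℕ) :
    (Polynomial.C a * Polynomial.X ^ n * q).coeff j
      = if n ≤ j then a * q.coeff (j - n) else 0 := by
  rw [show Polynomial.C a * Polynomial.X ^ n * q
      = Polynomial.C a * (q * Polynomial.X ^ n) from by ring,
    Polynomial.coeff_C_mul, Polynomial.coeff_mul_X_pow']
  split_ifs <;> simp

lemma PQ_coeff_zero (σ : ℕ → ℤ) : ∀ k, (PQ σ k).1.coeff 0 = 0 ∧ (PQ σ k).2.coeff 0 = 0 := by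
  intro k
  induction k with
  | zero => simp [PQ]
  | succ k ih =>
    have hpos : 0 < 2 ^ k := Nat.two_pow_pos k
    simp only [PQ, Polynomial.coeff_add, Polynomial.coeff_sub, coeff_term]
    rw [if_neg (by omega)]
    constructor <;> simp [ih.1]

lemma PQ_coeff_high (σ : ℕ → ℤ) : ∀ k j, 2 ^ k < j →
    (PQ σ k).1.coeff j = 0 ∧ (PQ σ k).2.coeff j = 0 := by
  intro k
  induction k with
  | zero => intro j hj; simp only [PQ]; rw [Polynomial.coeff_X]; simp; omega
  | succ k ih =>
    intro j hj
    have h2 : 2 ^ (k + 1) = 2 ^ k + 2 ^ k := by ring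
    have h1 : (PQ σ k).1.coeff j = 0 := (ih j (by omega)).1
    have hq : (PQ σ k).2.coeff (j - 2 ^ k) = 0 := (ih _ (by omega)).2
    simp only [PQ, Polynomial.coeff_add, Polynomial.coeff_sub, coeff_term, h1, hq]
    constructor <;> split_ifs <;> simp

/-- The key lemma: `comp σ k [A]` spells out the coefficients of `P_k`, and
`comp σ k [B]` those of `Q_k`. -/
lemma key (σ : ℕ → ℤ) (hσ : ∀ k, σ k = 1 ∨ σ k = -1) : ∀ k,
    (comp σ k [Letter.A]).map phi
        = (List.range (2 ^ k)).map (fun i => (PQ σ k).1.coeff (i + 1))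
    ∧ (comp σ k [Letter.B]).map phi
        = (List.range (2 ^ k)).map (fun i => (PQ σ k).2.coeff (i + 1)) := by
  intro k
  induction k with
  | zero =>
    show (([Letter.A] : List Letter).map phi = _) ∧ (([Letter.B] : List Letter).map phi = _)
    rw [show List.range (2 ^ 0) = [0] from rfl]
    simp [phi, PQ, Polynomial.coeff_X_one]
  | succ k ih =>
    have h2 : 2 ^ (k + 1) = 2 ^ k + 2 ^ k := by ring
    have hlow : ∀ i < 2 ^ k,
        ((PQ σ (k+1)).1.coeff (i+1) = (PQ σ k).1.coeff (i+1)
          ∧ (PQ σ (k+1)).2.coeff (i+1) = (PQ σ k).1.coeff (i+1)) := by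
      intro i hi
      have hterm : (Polynomial.C ((σ k : ℂ)) * Polynomial.X ^ 2 ^ k * (PQ σ k).2).coeff (i+1)
          = 0 := by
        rw [coeff_term]
        split_ifs with hle
        · have : i + 1 - 2 ^ k = 0 := by omega
          rw [this, (PQ_coeff_zero σ k).2, mul_zero]
        · rfl
      constructor
      · simp only [PQ, Polynomial.coeff_add, hterm, add_zero]
      · simp only [PQ, Polynomial.coeff_sub, hterm, sub_zero]
    have hhigh : ∀ i < 2 ^ k,
        ((PQ σ (k+1)).1.coeff (2 ^ k + i + 1) = (σ k : ℂ) * (PQ σ k).2.coeff (i+1)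
          ∧ (PQ σ (k+1)).2.coeff (2 ^ k + i + 1) = -((σ k : ℂ)) * (PQ σ k).2.coeff (i+1)) := by
      intro i hi
      have hp0 : (PQ σ k).1.coeff (2 ^ k + i + 1) = 0 := (PQ_coeff_high σ k _ (by omega)).1
      have hterm : (Polynomial.C ((σ k : ℂ)) * Polynomial.X ^ 2 ^ k * (PQ σ k).2).coeff
          (2 ^ k + i + 1) = (σ k : ℂ) * (PQ σ k).2.coeff (i + 1) := by
        rw [coeff_term, if_pos (by omega),
          show 2 ^ k + i + 1 - 2 ^ k = i + 1 from by omega]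
      constructor
      · simp only [PQ, Polynomial.coeff_add, hterm, hp0, zero_add]
      · simp only [PQ, Polynomial.coeff_sub, hterm, hp0, zero_sub, neg_mul]
    have hrange : ∀ (f : ℕ → ℂ),
        (List.range (2 ^ (k+1))).map f
          = (List.range (2 ^ k)).map f
            ++ (List.range (2 ^ k)).map (fun i => f (2 ^ k + i)) := by
      intro f
      rw [h2, List.range_add, List.map_append, List.map_map]
      rfl
    have hBbar : (comp σ k [Letter.Bbar]).map phi
        = (List.range (2 ^ k)).map (fun i => -((PQ σ k).2.coeff (i + 1))) := by
      have hb : ([Letter.Bbar] : List Letter) = [Letter.B].map bar := rfl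
      rw [hb, comp_map_bar, List.map_map]
      have hpb : (phi ∘ bar) = fun l => -phi l := by funext l; exact phi_bar l
      rw [hpb]
      calc (comp σ k [Letter.B]).map (fun l => -phi l)
          = ((comp σ k [Letter.B]).map phi).map (fun z => -z) := by
            rw [List.map_map]; rfl
        _ = _ := by rw [ih.2, List.map_map]; rfl
    have hfirst : (comp σ k [Letter.A]).map phi
        = (List.range (2 ^ k)).map (fun i => (PQ σ (k+1)).1.coeff (i + 1)) := by
      rw [ih.1]
      exact List.map_congr_left fun i hi => ((hlow i (List.mem_range.mp hi)).1).symm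
    have hfirst' : (comp σ k [Letter.A]).map phi
        = (List.range (2 ^ k)).map (fun i => (PQ σ (k+1)).2.coeff (i + 1)) := by
      rw [ih.1]
      exact List.map_congr_left fun i hi => ((hlow i (List.mem_range.mp hi)).2).symm
    constructor
    · rw [comp_succ_single, hrange]
      rcases hσ k with h | h
      · rw [show Ssign (σ k) Letter.A = [Letter.A] ++ [Letter.B] from by simp [Ssign, h, Splus],
          comp_append, List.map_append, hfirst]
        congr 1
        rw [ih.2]
        refine List.map_congr_left fun i hi => ?_
        rw [(hhigh i (List.mem_range.mp hi)).1, h]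
        push_cast; ring
      · rw [show Ssign (σ k) Letter.A = [Letter.A] ++ [Letter.Bbar] from by
            simp [Ssign, h, Sminus], comp_append, List.map_append, hfirst]
        congr 1
        rw [hBbar]
        refine List.map_congr_left fun i hi => ?_
        rw [(hhigh i (List.mem_range.mp hi)).1, h]
        push_cast; ring
    · rw [comp_succ_single, hrange]
      rcases hσ k with h | h
      · rw [show Ssign (σ k) Letter.B = [Letter.A] ++ [Letter.Bbar] from by
            simp [Ssign, h, Splus], comp_append, List.map_append, hfirst']
        congr 1
        rw [hBbar]
        refine List.map_congr_left fun i hi => ?_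
        rw [(hhigh i (List.mem_range.mp hi)).2, h]
        push_cast; ring
      · rw [show Ssign (σ k) Letter.B = [Letter.A] ++ [Letter.B] from by
            simp [Ssign, h, Sminus], comp_append, List.map_append, hfirst']
        congr 1
        rw [ih.2]
        refine List.map_congr_left fun i hi => ?_
        rw [(hhigh i (List.mem_range.mp hi)).2, h]
        push_cast; ring

lemma comp_add (σ : ℕ → ℤ) (a : ℕ) : ∀ (b : ℕ) (u : List Letter),
    comp σ (a + b) u = comp σ a (comp (fun i => σ (a + i)) b u) := by
  intro b
  induction b with
  | zero => intro u; rfl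
  | succ b ih =>
    intro u
    show comp σ (a + b) (u.flatMap (Ssign (σ (a + b)))) = _
    rw [ih]
    rfl


/-- If `σ` is periodic with period `p`, then for every `n` the word
`a_{np} = ε_1 ⋯ ε_{2^{np}}` of coefficients of `P_{np}` equals
`φ((S_{σ_0} ∘ ⋯ ∘ S_{σ_{p-1}})^n (A))` (letterwise). -/
theorem stmt9 (σ : ℕ → ℤ) (hσ : ∀ k, σ k = 1 ∨ σ k = -1)
    (p : ℕ) (hp : 0 < p) (hper : ∀ k, σ (k + p) = σ k) :
    ∀ n : ℕ,
      (((fun u => comp σ p u)^[n]) [Letter.A]).map phi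
        = (List.range (2 ^ (n * p))).map (fun i => (PQ σ (n * p)).1.coeff (i + 1)) := by
  have hiter : ∀ n : ℕ, ((fun u => comp σ p u)^[n]) [Letter.A] = comp σ (n * p) [Letter.A] := by
    intro n
    induction n with
    | zero => rw [Nat.zero_mul]; rfl
    | succ n ih =>
      rw [Function.iterate_succ_apply', ih]
      have hs : (fun i => σ (p + i)) = σ := by
        funext i
        rw [Nat.add_comm, hper]
      rw [show (n + 1) * p = p + n * p from by ring, comp_add, hs]
  intro n
  rw [hiter, (key σ hσ (n * p)).1]
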